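/- In the weighted polynomial ring M = ℂ[Q,R] with the Serre derivation D, every nonzero graded ideal I stable under D contains some power of the principal ideal 𝔭 = (Δ), where Δ = (Q³-R²)/1728; i.e., there is r ≥ 0 with 𝔭^r ⊆ I. -/

import Mathlib

/-!
If `x` is a common zero of `I`, the polynomials all of whose `D`-derivatives vanish at `x`
form a `D`-stable ideal `P ⊇ I`, which is prime by the Leibniz rule in characteristic zero.
Euler's identity and `D = -(R/3) ∂_Q - (Q²/2) ∂_R` give `(Q³ - R²) ∂f ∈ (f, D f)` for
weighted-homogeneous `f`. So if `Q³ - R² ∉ P`, the partial derivatives of a homogeneous element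
of `P` stay in `P`, and descending in weight puts a nonzero constant in `P`. Hence `Δ` vanishes
on the zero locus of `I`, and the Nullstellensatz puts a power of `Δ` in `I`.
-/

open MvPolynomial

noncomputable section

/-- The ring of modular forms, modeled as a weighted polynomial ring `ℂ[Q,R]`,
`Q` of weight 4, `R` of weight 6. -/
abbrev MM := MvPolynomial (Fin 2) ℂ

def Qg : MM := X 0
def Rg : MM := X 1

/-- The weights: `deg Q = 4`, `deg R = 6`. -/
def wt : Fin 2 → ℕ := ![4, 6]

/-- The Serre derivation, determined by `D(Q) = -(1/3) R` and `D(R) = -(1/2) Q²`. -/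
def Dser : Derivation ℂ MM MM :=
  mkDerivation ℂ ![(-(1/3 : ℂ)) • Rg, (-(1/2 : ℂ)) • Qg ^ 2]

/-- `Δ = (Q³ - R²)/1728`. -/
def Δg : MM := (1/1728 : ℂ) • (Qg ^ 3 - Rg ^ 2)

/-- An ideal is graded (w.r.t. the weighted grading) if it is spanned by its
weighted-homogeneous elements. -/
def IsGradedIdeal (I : Ideal MM) : Prop :=
  I = Ideal.span {x : MM | x ∈ I ∧ ∃ n : ℕ, x ∈ weightedHomogeneousSubmodule ℂ wt n}

namespace Ideal

theorem natCast_mul_mem_iff {A : Type*} [CommRing A] [Algebra ℚ A] (I : Ideal A) {n : ℕ}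
    (hn : n ≠ 0) {a : A} : (n : A) * a ∈ I ↔ a ∈ I :=
  I.unit_mul_mem_iff_mem <| by
    simpa using (IsUnit.mk0 (n : ℚ) (by exact_mod_cast hn)).map (algebraMap ℚ A)

end Ideal

namespace Derivation

open Finset

variable {R A : Type*} [CommSemiring R] [CommRing A] [Algebra R A]

theorem iterate_apply_mul (D : Derivation R A A) (n : ℕ) (a b : A) :
    D^[n] (a * b) = ∑ ij ∈ antidiagonal n, n.choose ij.1 • (D^[ij.1] a * D^[ij.2] b) := by
  induction n with
  | zero => simp
  | succ n ih =>
    rw [sum_antidiagonal_choose_succ_nsmul (M := A) (fun i j => D^[i] a * D^[j] b) n]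
    simp only [Function.iterate_succ_apply', ih, map_sum, map_nsmul, leibniz, smul_eq_mul,
      smul_add, sum_add_distrib, add_right_inj]
    refine sum_congr rfl fun ⟨i, j⟩ hij ↦ ?_
    rw [n.choose_symm_of_eq_add (mem_antidiagonal.1 hij).symm, mul_comm]

/-- The largest `D`-stable ideal contained in `p`. -/
def stableCore (D : Derivation R A A) (p : Ideal A) : Ideal A where
  carrier := {a | ∀ n, D^[n] a ∈ p}
  zero_mem' n := by simp [iterate_map_zero]
  add_mem' ha hb n := by simpa only [iterate_map_add] using p.add_mem (ha n) (hb n)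
  smul_mem' c a ha n := by
    rw [smul_eq_mul, iterate_apply_mul]
    exact p.sum_mem fun ij _ ↦ p.nsmul_mem (p.mul_mem_left _ (ha ij.2)) _

variable {D : Derivation R A A} {p : Ideal A}

theorem mem_stableCore {a : A} : a ∈ D.stableCore p ↔ ∀ n, D^[n] a ∈ p := Iff.rfl

theorem stableCore_le : D.stableCore p ≤ p := fun _ ha ↦ ha 0

theorem apply_mem_stableCore {a : A} (ha : a ∈ D.stableCore p) : D a ∈ D.stableCore p :=
  fun n ↦ by simpa only [Function.iterate_succ_apply] using ha (n + 1)

theorem le_stableCore {I : Ideal A} (hI : ∀ a ∈ I, D a ∈ I) (hIp : I ≤ p) :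
    I ≤ D.stableCore p :=
  fun _ ha n ↦ hIp (Set.MapsTo.iterate hI n ha)

/-- Over `ℚ`, the `D`-stable core of a prime ideal is prime: in the Leibniz expansion of
`D^[m + n] (a * b)`, with `m`, `n` the first orders at which `a`, `b` leave `p`, every term
but `choose (m + n) m • D^[m] a * D^[n] b` lies in `p`. -/
instance stableCore_isPrime [Algebra ℚ A] [hp : p.IsPrime] : (D.stableCore p).IsPrime := by
  classical
  refine ⟨fun h ↦ hp.ne_top (top_le_iff.mp (h ▸ stableCore_le)), fun {a b} hab ↦ ?_⟩
  by_contra! hnot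
  obtain ⟨ha, hb⟩ := hnot
  simp only [mem_stableCore, not_forall] at ha hb
  set m := Nat.find ha
  set n := Nat.find hb
  have hsum := hab (m + n)
  have hmn_mem : (m, n) ∈ antidiagonal (m + n) := mem_antidiagonal.mpr rfl
  rw [iterate_apply_mul, ← add_sum_erase _ _ hmn_mem] at hsum
  have hrest : ∑ ij ∈ (antidiagonal (m + n)).erase (m, n),
      (m + n).choose ij.1 • (D^[ij.1] a * D^[ij.2] b) ∈ p := by
    refine p.sum_mem fun ⟨i, j⟩ hij ↦ ?_
    obtain ⟨hne, hij⟩ := mem_erase.mp hij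
    rw [HasAntidiagonal.mem_antidiagonal] at hij
    refine p.nsmul_mem ?_ _
    rcases lt_or_ge i m with hi | hi
    · exact p.mul_mem_right _ (not_not.mp (Nat.find_min ha hi))
    rcases lt_or_ge j n with hj | hj
    · exact p.mul_mem_left _ (not_not.mp (Nat.find_min hb hj))
    exact absurd (Prod.ext (by omega) (by omega)) hne
  have hmn := (p.add_mem_iff_left hrest).mp hsum
  rw [nsmul_eq_mul, p.natCast_mul_mem_iff (Nat.choose_pos (by omega)).ne'] at hmn
  rcases hp.mem_or_mem hmn with h | h
  exacts [Nat.find_spec ha h, Nat.find_spec hb h]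

end Derivation

namespace MvPolynomial

variable {R σ : Type*} [CommSemiring R]

theorem derivation_apply_eq_sum_mul_pderiv [Fintype σ]
    (D : Derivation R (MvPolynomial σ R) (MvPolynomial σ R)) (f : MvPolynomial σ R) :
    D f = ∑ i, D (X i) * pderiv i f := by
  classical
  have sum_apply (g : σ → Derivation R (MvPolynomial σ R) (MvPolynomial σ R)) (p) :
      (∑ i, g i) p = ∑ i, g i p := by
    simp only [← Derivation.coeFnAddMonoidHom_apply, map_sum, Finset.sum_apply]
  have hD : D = ∑ i, D (X i) • pderiv i :=
    derivation_ext fun j ↦ by simp [sum_apply, pderiv_X, Pi.single_apply]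
  conv_lhs => rw [hD]
  simp [sum_apply]

variable {w : σ → ℕ} {f : MvPolynomial σ R} {n : ℕ}

theorem IsWeightedHomogeneous.eq_C_coeff_zero (hw : ∀ i, w i ≠ 0)
    (hf : IsWeightedHomogeneous w f 0) : f = C (coeff 0 f) := by
  have := Finsupp.nonTorsionWeight_of (w := w) ℕ hw
  classical
  ext d
  rw [coeff_C]
  split_ifs with hd
  · rw [hd]
  · by_contra hc
    exact hd ((Finsupp.weight_eq_zero_iff_eq_zero w).mp (hf hc)).symm

theorem IsWeightedHomogeneous.exists_pderiv (hf : IsWeightedHomogeneous w f n) {i : σ}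
    (hi : pderiv i f ≠ 0) :
    ∃ n', n' + w i = n ∧ IsWeightedHomogeneous w (pderiv i f) n' := by
  classical
  obtain ⟨d, hd⟩ := exists_coeff_ne_zero hi
  rw [coeff_pderiv] at hd
  refine ⟨Finsupp.weight w d, ?_, hf.pderiv ?_⟩ <;>
  · rw [← hf (left_ne_zero_of_mul hd), map_add, Finsupp.weight_single, one_smul]

end MvPolynomial

theorem three_mul_Dser_Qg : 3 * Dser Qg = -Rg := by
  rw [Dser, Qg, mkDerivation_X, Matrix.cons_val_zero, smul_eq_C_mul, ← mul_assoc,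
    ← map_ofNat C 3, ← C_mul]
  norm_num

theorem two_mul_Dser_Rg : 2 * Dser Rg = -Qg ^ 2 := by
  rw [Dser, Rg, mkDerivation_X, Matrix.cons_val_one, Matrix.cons_val_zero, smul_eq_C_mul,
    ← mul_assoc, ← map_ofNat C 2, ← C_mul]
  norm_num

theorem six_mul_Dser (f : MM) :
    6 * Dser f = -2 * Rg * pderiv 0 f - 3 * Qg ^ 2 * pderiv 1 f := by
  rw [derivation_apply_eq_sum_mul_pderiv, Fin.sum_univ_two, ← Qg, ← Rg]
  linear_combination 2 * pderiv 0 f * three_mul_Dser_Qg + 3 * pderiv 1 f * two_mul_Dser_Rg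

theorem wt_euler {f : MM} {n : ℕ} (hf : IsWeightedHomogeneous wt f n) :
    4 * (Qg * pderiv 0 f) + 6 * (Rg * pderiv 1 f) = n * f := by
  simpa [Fin.sum_univ_two, wt, Qg, Rg, nsmul_eq_mul] using hf.sum_weight_X_mul_pderiv

theorem wt_ne_zero (i : Fin 2) : wt i ≠ 0 := by
  fin_cases i <;> decide

theorem Qg_pow_three_sub_Rg_sq_mul_pderiv_mem_span {f : MM} {n : ℕ}
    (hf : IsWeightedHomogeneous wt f n) (i : Fin 2) :
    (Qg ^ 3 - Rg ^ 2) * pderiv i f ∈ Ideal.span {f, Dser f} := by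
  rw [← Ideal.natCast_mul_mem_iff _ (n := 12) (by norm_num), Ideal.mem_span_pair]
  have hE := wt_euler hf
  have hS := six_mul_Dser f
  -- eliminate the other partial derivative between Euler's identity and the formula for `Dser`
  fin_cases i
  · refine ⟨3 * n * Qg ^ 2, 36 * Rg, ?_⟩
    push_cast
    linear_combination (-3 * Qg ^ 2) * hE + 6 * Rg * hS
  · refine ⟨-2 * n * Rg, -24 * Qg, ?_⟩
    push_cast
    linear_combination 2 * Rg * hE - 4 * Qg * hS

theorem Qg_pow_three_sub_Rg_sq_mem (P : Ideal MM) [hP : P.IsPrime]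
    (hPD : ∀ g ∈ P, Dser g ∈ P) {f : MM} {n : ℕ} (hf : IsWeightedHomogeneous wt f n)
    (hfP : f ∈ P) (hf0 : f ≠ 0) : Qg ^ 3 - Rg ^ 2 ∈ P := by
  by_contra hdisc
  induction n using Nat.strong_induction_on generalizing f with
  | _ n ih =>
  have hspan : Ideal.span {f, Dser f} ≤ P := by
    rw [Ideal.span_le, Set.insert_subset_iff, Set.singleton_subset_iff]
    exact ⟨hfP, hPD f hfP⟩
  have hpderiv (i : Fin 2) : pderiv i f = 0 := by
    by_contra hi
    obtain ⟨n', hn', hf'⟩ := hf.exists_pderiv hi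
    have hmem := (hP.mem_or_mem
      (hspan (Qg_pow_three_sub_Rg_sq_mul_pderiv_mem_span hf i))).resolve_left hdisc
    exact ih n' (by have := wt_ne_zero i; omega) hf' hmem hi
  have hn : n = 0 := by
    simpa [hpderiv, hf0] using (wt_euler hf).symm
  subst hn
  have hc : f = C (coeff 0 f) := hf.eq_C_coeff_zero wt_ne_zero
  have hunit : IsUnit f := hc ▸ (isUnit_iff_ne_zero.mpr fun h ↦ hf0 (by rw [hc, h, C_0])).map C
  exact hP.ne_top (Ideal.eq_top_of_isUnit_mem P hfP hunit)

theorem IsGradedIdeal.exists_ne_zero_isWeightedHomogeneous {I : Ideal MM}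
    (hgr : IsGradedIdeal I) (hne : I ≠ ⊥) :
    ∃ f ∈ I, f ≠ 0 ∧ ∃ n, IsWeightedHomogeneous wt f n := by
  by_contra! h
  apply hne
  rw [hgr, Ideal.span_eq_bot]
  rintro x ⟨hxI, n, hx⟩
  by_contra hx0
  exact h x hxI hx0 n hx

/-- Every nonzero graded `d`-ideal of `M = ℂ[Q,R]` contains a power of the principal
ideal `𝔭 = (Δ)`. -/
theorem d_ideal_contains_power_of_delta (I : Ideal MM) (hne : I ≠ ⊥) (hgr : IsGradedIdeal I)
    (hD : ∀ f ∈ I, Dser f ∈ I) :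
    ∃ r : ℕ, (Ideal.span {Δg}) ^ r ≤ I := by
  obtain ⟨f, hfI, hf0, n, hf⟩ := hgr.exists_ne_zero_isWeightedHomogeneous hne
  have hvanish : ∀ x ∈ zeroLocus ℂ I, aeval x (Qg ^ 3 - Rg ^ 2) = 0 := by
    intro x hx
    have := RingHom.ker_isPrime (aeval (R := ℂ) x)
    have hIP : I ≤ Dser.stableCore (RingHom.ker (aeval x)) :=
      Derivation.le_stableCore hD fun g hg ↦ mem_zeroLocus_iff.mp hx g hg
    exact Derivation.stableCore_le <| Qg_pow_three_sub_Rg_sq_mem _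
      (fun _ ↦ Derivation.apply_mem_stableCore) hf (hIP hfI) hf0
  have hrad : Δg ∈ I.radical := by
    rw [← vanishingIdeal_zeroLocus_eq_radical (K := ℂ)]
    intro x hx
    rw [Δg, map_smul, hvanish x hx, smul_zero]
  obtain ⟨r, hr⟩ := hrad
  exact ⟨r, by rwa [Ideal.span_singleton_pow, Ideal.span_singleton_le_iff_mem]⟩

end
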